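/- Let C be symmetric PSD with eigenvalues λ_1 ≥ ... ≥ λ_d, λ > 0, k ∈ {1,...,d}, and P^{-1/2} the exact rank-k sketched preconditioner. Then the ratio of the trace of M := P^{-1/2}(C+λI)P^{-1/2} to its smallest eigenvalue is at most (k·λ_k + Σ_{i>k} λ_i)/λ + d. -/

import Mathlib

open Matrix

/-- The smallest value of the Rayleigh quotient of `M`, i.e. the smallest eigenvalue
for symmetric `M`. -/
noncomputable def lamMin {d : ℕ} (M : Matrix (Fin d) (Fin d) ℝ) : ℝ :=
  ⨅ x : { x : EuclideanSpace ℝ (Fin d) // ‖x‖ = 1 },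
    inner (𝕜 := ℝ) (Matrix.toEuclideanLin M x.1) x.1

/-!
In the orthonormal eigenbasis `u` of `C`, the matrices `C + λI`, `P^{-1/2}` and hence
`M = P^{-1/2} (C + λI) P^{-1/2}` are all diagonal. The eigenvalue of `M` on `u i` is `1` for
`i ≤ k` and `(μ i + λ) / (μ k + λ)` for `i > k`, so all of them are at least
`c = λ / (μ k + λ)`. Dividing the trace by `c` turns the `i`-th eigenvalue into
`(μ (max i k) + λ) / λ`, and summing over `i` gives the bound.
-/

namespace Matrix

variable {n : Type*} [Fintype n]

noncomputable def spectralMatrix (u : n → n → ℝ) (a : n → ℝ) : Matrix n n ℝ :=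
  ∑ i, a i • vecMulVec (u i) (u i)

theorem sum_vecMulVec_self_eq_one [DecidableEq n] {u : n → n → ℝ}
    (hu : ∀ i j, u i ⬝ᵥ u j = if i = j then (1 : ℝ) else 0) :
    ∑ i, vecMulVec (u i) (u i) = 1 := by
  have hrows : of u * (of u)ᵀ = 1 := by
    ext i j
    simpa [mul_apply, dotProduct, one_apply] using hu i j
  rw [← mul_eq_one_comm.mp hrows]
  ext a b
  simp only [sum_apply, vecMulVec_apply, mul_apply, transpose_apply, of_apply]

theorem vecMulVec_self_mul_vecMulVec_self [DecidableEq n] {u : n → n → ℝ}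
    (hu : ∀ i j, u i ⬝ᵥ u j = if i = j then (1 : ℝ) else 0) (i j : n) :
    vecMulVec (u i) (u i) * vecMulVec (u j) (u j) =
      if i = j then vecMulVec (u i) (u i) else 0 := by
  rw [vecMulVec_mul_vecMulVec, hu]
  split_ifs with hij
  · rw [hij, one_smul]
  · rw [zero_smul, vecMulVec_zero]

theorem spectralMatrix_mul_spectralMatrix [DecidableEq n] {u : n → n → ℝ}
    (hu : ∀ i j, u i ⬝ᵥ u j = if i = j then (1 : ℝ) else 0) (a b : n → ℝ) :
    spectralMatrix u a * spectralMatrix u b = spectralMatrix u (a * b) := by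
  simp only [spectralMatrix, Finset.sum_mul_sum, smul_mul_smul,
    vecMulVec_self_mul_vecMulVec_self hu, smul_ite, smul_zero, Finset.sum_ite_eq,
    Finset.mem_univ, if_true, Pi.mul_apply]

theorem spectralMatrix_add (u : n → n → ℝ) (a b : n → ℝ) :
    spectralMatrix u (a + b) = spectralMatrix u a + spectralMatrix u b := by
  simp only [spectralMatrix, Pi.add_apply, add_smul, Finset.sum_add_distrib]

theorem spectralMatrix_const [DecidableEq n] {u : n → n → ℝ}
    (hu : ∀ i j, u i ⬝ᵥ u j = if i = j then (1 : ℝ) else 0) (c : ℝ) :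
    spectralMatrix u (fun _ => c) = c • 1 := by
  rw [spectralMatrix, ← Finset.smul_sum, sum_vecMulVec_self_eq_one hu]

theorem trace_spectralMatrix [DecidableEq n] {u : n → n → ℝ}
    (hu : ∀ i j, u i ⬝ᵥ u j = if i = j then (1 : ℝ) else 0) (a : n → ℝ) :
    trace (spectralMatrix u a) = ∑ i, a i := by
  simp [spectralMatrix, trace_sum, trace_smul, trace_vecMulVec, hu]

theorem dotProduct_spectralMatrix_mulVec (u : n → n → ℝ) (a y : n → ℝ) :
    y ⬝ᵥ (spectralMatrix u a *ᵥ y) = ∑ i, a i * (u i ⬝ᵥ y) ^ 2 := by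
  simp only [spectralMatrix, sum_mulVec, smul_mulVec, vecMulVec_mulVec, dotProduct_sum,
    dotProduct_smul, op_smul_eq_smul, smul_eq_mul]
  refine Finset.sum_congr rfl fun i _ => ?_
  rw [dotProduct_comm y (u i)]
  ring

theorem sum_sq_dotProduct_eq_dotProduct_self [DecidableEq n] {u : n → n → ℝ}
    (hu : ∀ i j, u i ⬝ᵥ u j = if i = j then (1 : ℝ) else 0) (y : n → ℝ) :
    ∑ i, (u i ⬝ᵥ y) ^ 2 = y ⬝ᵥ y := by
  simpa [spectralMatrix_const hu] using (dotProduct_spectralMatrix_mulVec u (fun _ => 1) y).symm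

theorem mul_dotProduct_self_le_dotProduct_spectralMatrix_mulVec [DecidableEq n] {u : n → n → ℝ}
    (hu : ∀ i j, u i ⬝ᵥ u j = if i = j then (1 : ℝ) else 0) {a : n → ℝ} {c : ℝ}
    (ha : ∀ i, c ≤ a i) (y : n → ℝ) :
    c * (y ⬝ᵥ y) ≤ y ⬝ᵥ (spectralMatrix u a *ᵥ y) := by
  rw [dotProduct_spectralMatrix_mulVec, ← sum_sq_dotProduct_eq_dotProduct_self hu, Finset.mul_sum]
  exact Finset.sum_le_sum fun i _ => mul_le_mul_of_nonneg_right (ha i) (sq_nonneg _)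

theorem sum_smul_add_smul_one_sub_sum_eq_spectralMatrix [DecidableEq n] {u : n → n → ℝ}
    (hu : ∀ i j, u i ⬝ᵥ u j = if i = j then (1 : ℝ) else 0) (t : Finset n) (a : n → ℝ) (b : ℝ) :
    ∑ i ∈ t, a i • vecMulVec (u i) (u i) + b • (1 - ∑ i ∈ t, vecMulVec (u i) (u i)) =
      spectralMatrix u (fun i => if i ∈ t then a i else b) := by
  rw [← sum_vecMulVec_self_eq_one hu, ← Finset.sum_add_sum_compl t, add_sub_cancel_left,
    Finset.smul_sum, spectralMatrix, ← Finset.sum_add_sum_compl t]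
  congr 1
  · exact Finset.sum_congr rfl fun i hi => by rw [if_pos hi]
  · exact Finset.sum_congr rfl fun i hi => by rw [if_neg (Finset.mem_compl.mp hi)]

end Matrix

theorem Real.inv_sqrt_mul_mul_inv_sqrt {a : ℝ} (ha : 0 ≤ a) (b : ℝ) :
    (√a)⁻¹ * b * (√a)⁻¹ = b / a :=
  calc (√a)⁻¹ * b * (√a)⁻¹ = b * (√a ^ 2)⁻¹ := by ring
    _ = b / a := by rw [Real.sq_sqrt ha, div_eq_mul_inv]

theorem le_lamMin {d : ℕ} [NeZero d] {M : Matrix (Fin d) (Fin d) ℝ} {c : ℝ}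
    (h : ∀ y, c * (y ⬝ᵥ y) ≤ y ⬝ᵥ (M *ᵥ y)) : c ≤ lamMin M := by
  have : Nonempty {x : EuclideanSpace ℝ (Fin d) // ‖x‖ = 1} :=
    ⟨⟨EuclideanSpace.single 0 1, by simp⟩⟩
  refine le_ciInf fun ⟨x, hx⟩ => ?_
  have hunit : x.ofLp ⬝ᵥ x.ofLp = 1 := by
    have := real_inner_self_eq_norm_sq x
    rw [hx, one_pow, EuclideanSpace.inner_eq_star_dotProduct] at this
    exact this
  simpa [hunit, EuclideanSpace.inner_eq_star_dotProduct, dotProduct_comm] using h x.ofLp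

theorem trace_div_lamMin_spectralMatrix_le {d : ℕ} [NeZero d] {u : Fin d → Fin d → ℝ}
    (hu : ∀ i j, u i ⬝ᵥ u j = if i = j then (1 : ℝ) else 0) {a : Fin d → ℝ} {c : ℝ}
    (hc : 0 < c) (ha : ∀ i, c ≤ a i) :
    trace (spectralMatrix u a) / lamMin (spectralMatrix u a) ≤ ∑ i, a i / c := by
  have hlam : c ≤ lamMin (spectralMatrix u a) :=
    le_lamMin (mul_dotProduct_self_le_dotProduct_spectralMatrix_mulVec hu ha)
  rw [trace_spectralMatrix hu, ← Finset.sum_div]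
  exact div_le_div_of_nonneg_left (Finset.sum_nonneg fun i _ => hc.le.trans (ha i)) hc hlam

theorem exact_sketched_preconditioner_condition_number_general {d : ℕ}
    (u : Fin d → Fin d → ℝ)
    (hu : ∀ i j, u i ⬝ᵥ u j = if i = j then (1 : ℝ) else 0)
    (μ : Fin d → ℝ) (hμ0 : ∀ i, 0 ≤ μ i)
    (l : ℝ) (hl : 0 < l) (k : Fin d)
    (C : Matrix (Fin d) (Fin d) ℝ)
    (hC : C = ∑ i, μ i • vecMulVec (u i) (u i))
    (Ph : Matrix (Fin d) (Fin d) ℝ)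
    (hPh : Ph = ∑ i ∈ Finset.Iic k, (Real.sqrt (μ i + l))⁻¹ • vecMulVec (u i) (u i)
        + (Real.sqrt (μ k + l))⁻¹ •
          ((1 : Matrix (Fin d) (Fin d) ℝ) - ∑ i ∈ Finset.Iic k, vecMulVec (u i) (u i))) :
    (Ph * (C + l • (1 : Matrix (Fin d) (Fin d) ℝ)) * Ph).trace /
        lamMin (Ph * (C + l • (1 : Matrix (Fin d) (Fin d) ℝ)) * Ph)
      ≤ (((Finset.Iic k).card : ℝ) * μ k + ∑ i ∈ Finset.Ioi k, μ i) / l + d := by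
  have : NeZero d := NeZero.of_pos k.pos
  have hpos : ∀ i, 0 < μ i + l := fun i => by linarith [hμ0 i]
  set s : Fin d → ℝ := fun i =>
    if i ∈ Finset.Iic k then (Real.sqrt (μ i + l))⁻¹ else (Real.sqrt (μ k + l))⁻¹
  set m : Fin d → ℝ := fun i => s i * (μ i + l) * s i
  have hM : Ph * (C + l • 1) * Ph = spectralMatrix u m := by
    have hC' : C = spectralMatrix u μ := hC
    rw [hPh, sum_smul_add_smul_one_sub_sum_eq_spectralMatrix hu, hC', ← spectralMatrix_const hu,
      ← spectralMatrix_add, spectralMatrix_mul_spectralMatrix hu,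
      spectralMatrix_mul_spectralMatrix hu]
    rfl
  have hm : ∀ i, m i = if i ∈ Finset.Iic k then 1 else (μ i + l) / (μ k + l) := by
    intro i
    simp only [m, s]
    split_ifs
    · rw [Real.inv_sqrt_mul_mul_inv_sqrt (hpos i).le, div_self (hpos i).ne']
    · rw [Real.inv_sqrt_mul_mul_inv_sqrt (hpos k).le]
  set c := l / (μ k + l)
  have hc : 0 < c := div_pos hl (hpos k)
  have hcm : ∀ i, c ≤ m i := fun i => by
    rw [hm]
    split_ifs
    · exact (div_le_one (hpos k)).mpr (by linarith [hμ0 k])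
    · exact div_le_div_of_nonneg_right (by linarith [hμ0 i]) (hpos k).le
  have hmc : ∀ i, m i / c = (if i ≤ k then μ k else μ i) / l + 1 := fun i => by
    rw [hm]
    simp only [c, Finset.mem_Iic]
    split_ifs
    all_goals field_simp [(hpos k).ne', hl.ne']
  rw [hM]
  refine (trace_div_lamMin_spectralMatrix_le hu hc hcm).trans_eq ?_
  simp [hmc, Finset.sum_add_distrib, ← Finset.sum_div, Finset.sum_ite, Finset.filter_ge_eq_Iic,
    not_le, Finset.filter_lt_eq_Ioi]

theorem exact_sketched_preconditioner_condition_number {d : ℕ}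
    (u : Fin d → Fin d → ℝ)
    (hu : ∀ i j, u i ⬝ᵥ u j = if i = j then (1 : ℝ) else 0)
    (μ : Fin d → ℝ) (hμ0 : ∀ i, 0 ≤ μ i) (hμ : ∀ i j : Fin d, i ≤ j → μ j ≤ μ i)
    (l : ℝ) (hl : 0 < l) (k : Fin d)
    (C : Matrix (Fin d) (Fin d) ℝ)
    (hC : C = ∑ i, μ i • vecMulVec (u i) (u i))
    (Ph : Matrix (Fin d) (Fin d) ℝ)
    (hPh : Ph = ∑ i ∈ Finset.Iic k, (Real.sqrt (μ i + l))⁻¹ • vecMulVec (u i) (u i)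
        + (Real.sqrt (μ k + l))⁻¹ •
          ((1 : Matrix (Fin d) (Fin d) ℝ) - ∑ i ∈ Finset.Iic k, vecMulVec (u i) (u i))) :
    (Ph * (C + l • (1 : Matrix (Fin d) (Fin d) ℝ)) * Ph).trace /
        lamMin (Ph * (C + l • (1 : Matrix (Fin d) (Fin d) ℝ)) * Ph)
      ≤ (((Finset.Iic k).card : ℝ) * μ k + ∑ i ∈ Finset.Ioi k, μ i) / l + d :=
  exact_sketched_preconditioner_condition_number_general u hu μ hμ0 l hl k C hC Ph hPh
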